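/- Let φ ≥ 26 and 0 < ε ≤ 1/φ. There exist probability distributions on [0,1] for the weights w_{11}, w_{12}, w_{21}, w_{22} of K_{2,2}, each with probability density bounded from above by φ (namely w_{11} uniform on [1−1/φ, 1], w_{12} and w_{21} uniform on (23/26, 23/26+1/φ], and w_{22} uniform on [20/26−1/φ, 20/26+3/φ], all independent), such that the probability of the event E^φ_ε is at least εφ/4. -/

import Mathlib

open MeasureTheory

/-- The uniform distribution on the interval `[a, b]`. -/
noncomputable def unifIcc (a b : ℝ) : Measure ℝ :=
  (ENNReal.ofReal (b - a))⁻¹ • (volume : Measure ℝ).restrict (Set.Icc a b)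

/-- The uniform distribution on the interval `(a, b]`. -/
noncomputable def unifIoc (a b : ℝ) : Measure ℝ :=
  (ENNReal.ofReal (b - a))⁻¹ • (volume : Measure ℝ).restrict (Set.Ioc a b)

/-- The smoothed weight distributions on `K_{2,2}`: `w₁₁ ~ U[1-1/φ, 1]`,
`w₁₂, w₂₁ ~ U(23/26, 23/26+1/φ]` and `w₂₂ ~ U[20/26-1/φ, 20/26+3/φ]`, independent
(indexed so that `w (i, j)` is the weight `w_{(i+1)(j+1)}`). -/
noncomputable def smoothedK22Marginal (φ : ℝ) (p : Fin 2 × Fin 2) : Measure ℝ :=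
  if p.1 = 0 then
    if p.2 = 0 then unifIcc (1 - 1 / φ) 1 else unifIoc (23 / 26) (23 / 26 + 1 / φ)
  else
    if p.2 = 0 then unifIoc (23 / 26) (23 / 26 + 1 / φ)
    else unifIcc (20 / 26 - 1 / φ) (20 / 26 + 3 / φ)

/-!
Each weight is Lebesgue measure conditioned on an interval of length at least `1/φ` inside
`[0, 1]`, which gives the first three claims. For the event, integrate out `w₂₂` first: almost
surely `σ = w₁₂ + w₂₁ - w₁₁ ∈ (20/26, 20/26 + 3/φ]`, so the window `[σ - ε, σ)` lies inside the
support `[20/26 - 1/φ, 20/26 + 3/φ]` of `w₂₂`, of length `4/φ`, and has conditional probability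
exactly `εφ/4`.
-/

open ProbabilityTheory Set Function
open scoped ENNReal

namespace MeasureTheory

variable {ι : Type*} [Fintype ι] [DecidableEq ι] {X : ι → Type*} [∀ i, MeasurableSpace (X i)]
  (μ : ∀ i, Measure (X i)) [∀ i, IsProbabilityMeasure (μ i)]

theorem lintegral_pi_eq_lintegral_lmarginal_singleton (i : ι) {f : (∀ i, X i) → ℝ≥0∞}
    (hf : Measurable f) :
    ∫⁻ x, f x ∂Measure.pi μ = ∫⁻ x, (∫⋯∫⁻_{i}, f ∂μ) x ∂Measure.pi μ := by
  -- integrating out `xᵢ` a second time only multiplies by `μ i univ = 1`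
  have hidem : ∫⋯∫⁻_{i}, (∫⋯∫⁻_{i}, f ∂μ) ∂μ = ∫⋯∫⁻_{i}, f ∂μ := by
    ext x
    simp [lmarginal_singleton (∫⋯∫⁻_{i}, f ∂μ),
      lmarginal_update_of_mem μ (Finset.mem_singleton_self i)]
  have hdisj : Disjoint {i} (Finset.univ.erase i) :=
    Finset.disjoint_singleton_left.2 (Finset.notMem_erase i _)
  have huniv : {i} ∪ Finset.univ.erase i = (Finset.univ : Finset ι) := by simp
  let x₀ : ∀ j, X j := fun j => (nonempty_of_isProbabilityMeasure (μ j)).some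
  rw [lintegral_eq_lmarginal_univ x₀, lintegral_eq_lmarginal_univ x₀, ← huniv,
    lmarginal_union' μ _ hf hdisj, lmarginal_union' μ _ (hf.lmarginal μ) hdisj, hidem]

theorem pi_eq_lintegral_measure_preimage_update (i : ι) {S : Set (∀ i, X i)}
    (hS : MeasurableSet S) :
    Measure.pi μ S = ∫⁻ x, μ i (update x i ⁻¹' S) ∂Measure.pi μ := by
  rw [← lintegral_indicator_one hS, lintegral_pi_eq_lintegral_lmarginal_singleton μ i
    (measurable_one.indicator hS), lmarginal_singleton]
  congr! with x
  rw [← lintegral_indicator_one ((measurable_update x) hS)]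
  rfl

end MeasureTheory

namespace ProbabilityTheory

variable {Ω : Type*} [MeasurableSpace Ω] {μ : Measure Ω} {s t : Set Ω}

theorem cond_compl_eq_zero_of_subset (hs : MeasurableSet s) (hst : s ⊆ t) : μ[tᶜ|s] = 0 :=
  mem_ae_iff.1 (Filter.mem_of_superset (ae_cond_mem hs) hst)

theorem cond_apply_le_mul {c : ℝ≥0∞} (hc : c⁻¹ ≤ μ s) (t : Set Ω) : μ[t|s] ≤ c * μ t := by
  rw [cond, Measure.smul_apply, smul_eq_mul]
  exact mul_le_mul' (ENNReal.inv_le_iff_inv_le.2 hc) (Measure.restrict_apply_le s t)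

theorem volume_cond_Icc_apply_of_subset {a b : ℝ} {t : Set ℝ} (ht : t ⊆ Icc a b) :
    volume[t|Icc a b] = volume t / ENNReal.ofReal (b - a) := by
  rw [cond_apply measurableSet_Icc, inter_eq_right.2 ht, Real.volume_Icc, ENNReal.div_eq_inv_mul]

end ProbabilityTheory

theorem unifIcc_eq_cond (a b : ℝ) : unifIcc a b = volume[|Icc a b] := by
  rw [ProbabilityTheory.cond, Real.volume_Icc]; rfl

theorem unifIoc_eq_cond (a b : ℝ) : unifIoc a b = volume[|Ioc a b] := by
  rw [ProbabilityTheory.cond, Real.volume_Ioc]; rfl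

theorem isProbabilityMeasure_unifIcc {a b : ℝ} (h : a < b) :
    IsProbabilityMeasure (unifIcc a b) := by
  rw [unifIcc_eq_cond]
  exact cond_isProbabilityMeasure_of_finite (by simpa using h) (by simp)

theorem isProbabilityMeasure_unifIoc {a b : ℝ} (h : a < b) :
    IsProbabilityMeasure (unifIoc a b) := by
  rw [unifIoc_eq_cond]
  exact cond_isProbabilityMeasure_of_finite (by simpa using h) (by simp)

theorem isProbabilityMeasure_smoothedK22Marginal {φ : ℝ} (hφ : 0 < φ) (p : Fin 2 × Fin 2) :
    IsProbabilityMeasure (smoothedK22Marginal φ p) := by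
  have hinv₀ : 0 < 1 / φ := by positivity
  obtain ⟨i, j⟩ := p
  fin_cases i <;> fin_cases j
  · exact isProbabilityMeasure_unifIcc (by linarith)
  · exact isProbabilityMeasure_unifIoc (by linarith)
  · exact isProbabilityMeasure_unifIoc (by linarith)
  · exact isProbabilityMeasure_unifIcc (by linarith [div_pos three_pos hφ])

theorem exists_smoothedK22Marginal_eq_cond {φ : ℝ} (hφ : 26 ≤ φ) (p : Fin 2 × Fin 2) :
    ∃ I : Set ℝ, MeasurableSet I ∧ I ⊆ Icc 0 1 ∧ ENNReal.ofReal (1 / φ) ≤ volume I ∧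
      smoothedK22Marginal φ p = volume[|I] := by
  have hinv₀ : 0 < 1 / φ := by positivity
  have hinv : 1 / φ ≤ 1 / 26 := one_div_le_one_div_of_le (by norm_num) hφ
  have h₃ : 3 / φ = 3 * (1 / φ) := by ring
  obtain ⟨i, j⟩ := p
  fin_cases i <;> fin_cases j
  · refine ⟨Icc (1 - 1 / φ) 1, measurableSet_Icc, Icc_subset_Icc (by linarith) le_rfl, ?_,
      unifIcc_eq_cond _ _⟩
    rw [Real.volume_Icc]; exact ENNReal.ofReal_le_ofReal (by linarith)
  · refine ⟨Ioc (23 / 26) (23 / 26 + 1 / φ), measurableSet_Ioc,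
      Ioc_subset_Icc_self.trans (Icc_subset_Icc (by norm_num) (by linarith)), ?_,
      unifIoc_eq_cond _ _⟩
    rw [Real.volume_Ioc]; exact ENNReal.ofReal_le_ofReal (by linarith)
  · refine ⟨Ioc (23 / 26) (23 / 26 + 1 / φ), measurableSet_Ioc,
      Ioc_subset_Icc_self.trans (Icc_subset_Icc (by norm_num) (by linarith)), ?_,
      unifIoc_eq_cond _ _⟩
    rw [Real.volume_Ioc]; exact ENNReal.ofReal_le_ofReal (by linarith)
  · refine ⟨Icc (20 / 26 - 1 / φ) (20 / 26 + 3 / φ), measurableSet_Icc,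
      Icc_subset_Icc (by linarith) (by linarith), ?_, unifIcc_eq_cond _ _⟩
    rw [Real.volume_Icc]; exact ENNReal.ofReal_le_ofReal (by linarith)

def eventE (φ ε : ℝ) : Set (Fin 2 × Fin 2 → ℝ) :=
  {w | w (0, 0) ∈ Icc (1 - 1 / φ) 1 ∧ w (0, 1) ∈ Ioc (23 / 26 : ℝ) (23 / 26 + 1 / φ) ∧
    w (1, 0) ∈ Ioc (23 / 26 : ℝ) (23 / 26 + 1 / φ) ∧
    w (1, 1) ∈ Ico (w (0, 1) + w (1, 0) - w (0, 0) - ε) (w (0, 1) + w (1, 0) - w (0, 0))}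

theorem measurableSet_eventE (φ ε : ℝ) : MeasurableSet (eventE φ ε) := by
  unfold eventE
  measurability

theorem preimage_update_eventE {φ ε : ℝ} {w : Fin 2 × Fin 2 → ℝ}
    (h₀₀ : w (0, 0) ∈ Icc (1 - 1 / φ) 1) (h₀₁ : w (0, 1) ∈ Ioc (23 / 26 : ℝ) (23 / 26 + 1 / φ))
    (h₁₀ : w (1, 0) ∈ Ioc (23 / 26 : ℝ) (23 / 26 + 1 / φ)) :
    update w (1, 1) ⁻¹' eventE φ ε =
      Ico (w (0, 1) + w (1, 0) - w (0, 0) - ε) (w (0, 1) + w (1, 0) - w (0, 0)) := by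
  ext y
  simp only [eventE, mem_preimage, mem_ofPred_eq, update_self,
    update_of_ne (show ((0, 0) : Fin 2 × Fin 2) ≠ (1, 1) by decide),
    update_of_ne (show ((0, 1) : Fin 2 × Fin 2) ≠ (1, 1) by decide),
    update_of_ne (show ((1, 0) : Fin 2 × Fin 2) ≠ (1, 1) by decide)]
  exact ⟨fun h => h.2.2.2, fun h => ⟨h₀₀, h₀₁, h₁₀, h⟩⟩

theorem smoothedK22Marginal_one_one_Ico {φ ε σ : ℝ} (hφ : 0 < φ) (hε : ε ≤ 1 / φ)
    (hσ : σ ∈ Ioc (20 / 26) (20 / 26 + 3 / φ)) :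
    smoothedK22Marginal φ (1, 1) (Ico (σ - ε) σ) = ENNReal.ofReal (ε * φ / 4) := by
  have hsub : Ico (σ - ε) σ ⊆ Icc (20 / 26 - 1 / φ) (20 / 26 + 3 / φ) := fun y hy => by
    constructor <;> linarith [hy.1, hy.2, hσ.1, hσ.2]
  have hwidth : 20 / 26 + 3 / φ - (20 / 26 - 1 / φ) = 4 / φ := by ring
  rw [show smoothedK22Marginal φ (1, 1) = _ from unifIcc_eq_cond _ _,
    volume_cond_Icc_apply_of_subset hsub, Real.volume_Ico, sub_sub_cancel, hwidth,
    ← ENNReal.ofReal_div_of_pos (by positivity)]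
  congr 1
  field_simp

theorem smoothedK22Marginal_compl_Icc_zero_one {φ : ℝ} (hφ : 26 ≤ φ) (p : Fin 2 × Fin 2) :
    smoothedK22Marginal φ p (Icc 0 1)ᶜ = 0 := by
  obtain ⟨I, hI, hI01, -, hμI⟩ := exists_smoothedK22Marginal_eq_cond hφ p
  rw [hμI]
  exact cond_compl_eq_zero_of_subset hI hI01

theorem smoothedK22Marginal_le_ofReal_mul_volume {φ : ℝ} (hφ : 26 ≤ φ) (p : Fin 2 × Fin 2)
    (s : Set ℝ) : smoothedK22Marginal φ p s ≤ ENNReal.ofReal φ * volume s := by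
  obtain ⟨I, -, -, hIvol, hμI⟩ := exists_smoothedK22Marginal_eq_cond hφ p
  rw [hμI]
  refine cond_apply_le_mul ?_ s
  rwa [← ENNReal.ofReal_inv_of_pos (by linarith), ← one_div]

theorem ofReal_le_pi_smoothedK22Marginal_eventE {φ ε : ℝ} (hφ : 0 < φ) (hε : ε ≤ 1 / φ) :
    ENNReal.ofReal (ε * φ / 4) ≤ Measure.pi (smoothedK22Marginal φ) (eventE φ ε) := by
  have := isProbabilityMeasure_smoothedK22Marginal hφ
  have hcoord {p : Fin 2 × Fin 2} {J : Set ℝ} (hJ : MeasurableSet J)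
      (h : smoothedK22Marginal φ p = volume[|J]) :
      ∀ᵐ w ∂Measure.pi (smoothedK22Marginal φ), w p ∈ J :=
    (Measure.quasiMeasurePreserving_eval _ p).ae (h ▸ ae_cond_mem hJ)
  rw [pi_eq_lintegral_measure_preimage_update _ (1, 1) (measurableSet_eventE φ ε)]
  calc ENNReal.ofReal (ε * φ / 4)
      = ∫⁻ _, ENNReal.ofReal (ε * φ / 4) ∂Measure.pi (smoothedK22Marginal φ) := by simp
    _ ≤ _ := lintegral_mono_ae ?_
  filter_upwards [hcoord (p := (0, 0)) measurableSet_Icc (unifIcc_eq_cond _ _),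
    hcoord (p := (0, 1)) measurableSet_Ioc (unifIoc_eq_cond _ _),
    hcoord (p := (1, 0)) measurableSet_Ioc (unifIoc_eq_cond _ _)]
    with w h₀₀ h₀₁ h₁₀
  rw [preimage_update_eventE h₀₀ h₀₁ h₁₀]
  refine (smoothedK22Marginal_one_one_Ico hφ hε ?_).ge
  have h₃ : 3 / φ = 3 * (1 / φ) := by ring
  constructor <;> linarith [h₀₀.1, h₀₀.2, h₀₁.1, h₀₁.2, h₁₀.1, h₁₀.2]

theorem prob_event_E_phi_eps_general (φ ε : ℝ) (hφ : 26 ≤ φ) (hε₁ : ε ≤ 1 / φ) :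
    (∀ p : Fin 2 × Fin 2, IsProbabilityMeasure (smoothedK22Marginal φ p)) ∧
    (∀ p : Fin 2 × Fin 2, smoothedK22Marginal φ p (Set.Icc (0 : ℝ) 1)ᶜ = 0) ∧
    (∀ (p : Fin 2 × Fin 2) (s : Set ℝ),
      smoothedK22Marginal φ p s ≤ ENNReal.ofReal φ * volume s) ∧
    ENNReal.ofReal (ε * φ / 4) ≤
      Measure.pi (smoothedK22Marginal φ)
        {w : Fin 2 × Fin 2 → ℝ |
          w (0, 0) ∈ Set.Icc (1 - 1 / φ) 1 ∧
          w (0, 1) ∈ Set.Ioc (23 / 26 : ℝ) (23 / 26 + 1 / φ) ∧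
          w (1, 0) ∈ Set.Ioc (23 / 26 : ℝ) (23 / 26 + 1 / φ) ∧
          w (1, 1) ∈ Set.Ico (w (0, 1) + w (1, 0) - w (0, 0) - ε)
            (w (0, 1) + w (1, 0) - w (0, 0))} := by
  have hφ₀ : 0 < φ := by linarith
  exact ⟨isProbabilityMeasure_smoothedK22Marginal hφ₀,
    smoothedK22Marginal_compl_Icc_zero_one hφ, smoothedK22Marginal_le_ofReal_mul_volume hφ,
    ofReal_le_pi_smoothedK22Marginal_eventE hφ₀ hε₁⟩

/-- **Probability of the event `E^φ_ε`.** Let `φ ≥ 26` and `0 < ε ≤ 1/φ`. The smoothed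
weight distributions above are probability distributions on `[0,1]` with densities
bounded by `φ`, and under them the probability of the event `E^φ_ε`, i.e. that
`w₁₁ ∈ [1-1/φ, 1]`, `w₁₂, w₂₁ ∈ (23/26, 23/26+1/φ]` and
`w₂₂ ∈ [w₁₂ + w₂₁ - w₁₁ - ε, w₁₂ + w₂₁ - w₁₁)`, is at least `ε·φ/4`. -/
theorem prob_event_E_phi_eps (φ ε : ℝ) (hφ : 26 ≤ φ) (hε₀ : 0 < ε) (hε₁ : ε ≤ 1 / φ) :
    (∀ p : Fin 2 × Fin 2, IsProbabilityMeasure (smoothedK22Marginal φ p)) ∧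
    (∀ p : Fin 2 × Fin 2, smoothedK22Marginal φ p (Set.Icc (0 : ℝ) 1)ᶜ = 0) ∧
    (∀ (p : Fin 2 × Fin 2) (s : Set ℝ),
      smoothedK22Marginal φ p s ≤ ENNReal.ofReal φ * volume s) ∧
    ENNReal.ofReal (ε * φ / 4) ≤
      Measure.pi (smoothedK22Marginal φ)
        {w : Fin 2 × Fin 2 → ℝ |
          w (0, 0) ∈ Set.Icc (1 - 1 / φ) 1 ∧
          w (0, 1) ∈ Set.Ioc (23 / 26 : ℝ) (23 / 26 + 1 / φ) ∧
          w (1, 0) ∈ Set.Ioc (23 / 26 : ℝ) (23 / 26 + 1 / φ) ∧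
          w (1, 1) ∈ Set.Ico (w (0, 1) + w (1, 0) - w (0, 0) - ε)
            (w (0, 1) + w (1, 0) - w (0, 0))} :=
  prob_event_E_phi_eps_general φ ε hφ hε₁
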